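/- arXiv:2502.07564 — 3 statements merged into one kernel-verified Lean document; each statement's English description precedes it below -/
import Mathlib

section
/- Under the arc-sliding setup, the coordinates x = α₁μ₀ν₁ + α₂μ₀ν₂ and y = −α₁ν₀ν₁ + α₂ν₀ν₂ satisfy the quartic equation [1 − (μ₀² − ν₀²)²](ν₀² x² − μ₀² y²)² + 4(1 − α₁² − α₂²)μ₀²ν₀²(μ₀² − ν₀²)(ν₀² x² − μ₀² y²) − 4(α₁² + α₂²)μ₀²ν₀²(ν₀² x² + μ₀² y²) + 8(α₂² − α₁²)μ₀³ν₀³ x y − 4[1 − (α₁+α₂)²][1 − (α₁−α₂)²]μ₀⁴ν₀⁴ = 0. -/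
/-- the quartic equation (4) satisfied by the traced point. -/
theorem stmt6 (α₁ α₂ μ₀ ν₀ μ₁ ν₁ μ₂ ν₂ x y : ℝ)
    (hα₁ : α₁ ≠ 0) (hα₂ : α₂ ≠ 0) (hμν : μ₀ * ν₀ ≠ 0)
    (h₀ : μ₀ ^ 2 + ν₀ ^ 2 = 1) (hc₁ : μ₁ ^ 2 + ν₁ ^ 2 = 1) (hc₂ : μ₂ ^ 2 + ν₂ ^ 2 = 1)
    (hnorm : 1 = α₁ ^ 2 + α₂ ^ 2 +
      2 * α₁ * α₂ * ((μ₀ ^ 2 - ν₀ ^ 2) * (ν₁ * ν₂) + μ₁ * μ₂))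
    (hx : x = α₁ * μ₀ * ν₁ + α₂ * μ₀ * ν₂)
    (hy : y = -α₁ * ν₀ * ν₁ + α₂ * ν₀ * ν₂) :
    (1 - (μ₀ ^ 2 - ν₀ ^ 2) ^ 2) * (ν₀ ^ 2 * x ^ 2 - μ₀ ^ 2 * y ^ 2) ^ 2
      + 4 * (1 - α₁ ^ 2 - α₂ ^ 2) * μ₀ ^ 2 * ν₀ ^ 2 * (μ₀ ^ 2 - ν₀ ^ 2) *
          (ν₀ ^ 2 * x ^ 2 - μ₀ ^ 2 * y ^ 2)
      - 4 * (α₁ ^ 2 + α₂ ^ 2) * μ₀ ^ 2 * ν₀ ^ 2 * (ν₀ ^ 2 * x ^ 2 + μ₀ ^ 2 * y ^ 2)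
      + 8 * (α₂ ^ 2 - α₁ ^ 2) * μ₀ ^ 3 * ν₀ ^ 3 * x * y
      - 4 * (1 - (α₁ + α₂) ^ 2) * (1 - (α₁ - α₂) ^ 2) * μ₀ ^ 4 * ν₀ ^ 4 = 0 := by
  subst hx hy
  linear_combination
    (16 * μ₀^4 * ν₀^4 * α₁^2 * α₂^2 * (ν₂^2 - 1)) * hc₁
    + (-16 * μ₀^4 * ν₀^4 * α₁^2 * α₂^2 * μ₁^2) * hc₂
    + (-4 * μ₀^4 * ν₀^4 * (1 - α₁^2 - α₂^2
        - 2*α₁*α₂*(μ₀^2 - ν₀^2)*ν₁*ν₂ + 2*α₁*α₂*μ₁*μ₂)) * hnorm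
end

section
/- Under the arc-sliding setup with z ≠ 0, one has μ₁ = τ₊/(4α₁μ₀²ν₀² z) where τ₊ = (ν₀²−μ₀²−1)ν₀² x² + (μ₀²−ν₀²−1)μ₀² y² + 2μ₀ν₀ x y + 2(1 + α₁² − α₂²)μ₀²ν₀², with x, y, z as defined. -/
/-- the rational expression for μ₁ in terms of x, y, z. -/
theorem stmt7 (α₁ α₂ μ₀ ν₀ μ₁ ν₁ μ₂ ν₂ x y z : ℝ)
    (hα₁ : α₁ ≠ 0) (hα₂ : α₂ ≠ 0) (hμν : μ₀ * ν₀ ≠ 0)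
    (h₀ : μ₀ ^ 2 + ν₀ ^ 2 = 1) (hc₁ : μ₁ ^ 2 + ν₁ ^ 2 = 1) (hc₂ : μ₂ ^ 2 + ν₂ ^ 2 = 1)
    (hnorm : 1 = α₁ ^ 2 + α₂ ^ 2 +
      2 * α₁ * α₂ * ((μ₀ ^ 2 - ν₀ ^ 2) * (ν₁ * ν₂) + μ₁ * μ₂))
    (hx : x = α₁ * μ₀ * ν₁ + α₂ * μ₀ * ν₂)
    (hy : y = -α₁ * ν₀ * ν₁ + α₂ * ν₀ * ν₂)
    (hz : z = α₁ * μ₁ + α₂ * μ₂) (hz0 : z ≠ 0) :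
    μ₁ = ((ν₀ ^ 2 - μ₀ ^ 2 - 1) * ν₀ ^ 2 * x ^ 2 + (μ₀ ^ 2 - ν₀ ^ 2 - 1) * μ₀ ^ 2 * y ^ 2
          + 2 * μ₀ * ν₀ * x * y + 2 * (1 + α₁ ^ 2 - α₂ ^ 2) * μ₀ ^ 2 * ν₀ ^ 2) /
        (4 * α₁ * μ₀ ^ 2 * ν₀ ^ 2 * z) := by
  have hμ0 : μ₀ ≠ 0 := fun h => hμν (by simp [h])
  have hν0 : ν₀ ≠ 0 := fun h => hμν (by simp [h])
  have hden : 4 * α₁ * μ₀ ^ 2 * ν₀ ^ 2 * z ≠ 0 := by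
    apply mul_ne_zero (mul_ne_zero (mul_ne_zero (by positivity) (pow_ne_zero 2 hμ0)) (pow_ne_zero 2 hν0)) hz0
  rw [eq_div_iff hden]
  subst hx hy hz
  linear_combination (-2 * μ₀ ^ 2 * ν₀ ^ 2) * hnorm +
    (4 * α₁ ^ 2 * μ₀ ^ 2 * ν₀ ^ 2) * hc₁
end

section
/- Let a, b, c, d be nonzero reals, e real, with δ = (ad+bc+e²)(ad+bc−e²)(ad−bc+e²)(ad−bc−e²) ≥ 0, ρ = (a²d² + b²c² − e⁴ + √δ)/(2a²b²), and κ = abρ/(cd). Suppose 𝒬(u,v) = a²u²v² − b²u² − c²v² + d² − 2e²uv = 0 with a²u² − c² ≠ 0 and ρ > 0. Set ω = u/√ρ and ξ = ((a²u² − c²)v − e²u)/(cd). Then ξ² = (1 − ω²)(1 − κ²ω²). -/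
/-!
δ is the discriminant of the quadratic a²b² x² − (a²d² + b²c² − e⁴) x + c²d², so ρ is one of its
roots. Modulo that relation and 𝒬(u, v) = 0, the polynomial identity
ρ ((a²u² − c²) v − e² u)² = (ρ − u²)(c²d² − a²b²ρ u²) holds; dividing by ρ c²d² gives the quartic.
-/

lemma discrim_jacobi (a b c d e : ℝ) :
    discrim (a ^ 2 * b ^ 2) (-(a ^ 2 * d ^ 2 + b ^ 2 * c ^ 2 - e ^ 4)) (c ^ 2 * d ^ 2) =
      (a * d + b * c + e ^ 2) * (a * d + b * c - e ^ 2) *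
        ((a * d - b * c + e ^ 2) * (a * d - b * c - e ^ 2)) := by
  rw [discrim]; ring

lemma jacobi_modulus_root {a b c d e δ ρ : ℝ} (ha : a ≠ 0) (hb : b ≠ 0)
    (hδ : δ = (a * d + b * c + e ^ 2) * (a * d + b * c - e ^ 2) *
      ((a * d - b * c + e ^ 2) * (a * d - b * c - e ^ 2)))
    (hδ0 : 0 ≤ δ)
    (hρ : ρ = (a ^ 2 * d ^ 2 + b ^ 2 * c ^ 2 - e ^ 4 + Real.sqrt δ) / (2 * a ^ 2 * b ^ 2)) :
    a ^ 2 * b ^ 2 * ρ ^ 2 - (a ^ 2 * d ^ 2 + b ^ 2 * c ^ 2 - e ^ 4) * ρ + c ^ 2 * d ^ 2 = 0 := by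
  have hdisc : discrim (a ^ 2 * b ^ 2) (-(a ^ 2 * d ^ 2 + b ^ 2 * c ^ 2 - e ^ 4)) (c ^ 2 * d ^ 2) =
      Real.sqrt δ * Real.sqrt δ := by
    rw [Real.mul_self_sqrt hδ0, hδ, discrim_jacobi]
  have hroot := (quadratic_eq_zero_iff (by positivity) hdisc ρ).mpr
    (Or.inl (by rw [hρ, neg_neg, mul_assoc]))
  linear_combination hroot

lemma jacobi_quartic_numerator {a b c d e ρ u v : ℝ}
    (hρ : a ^ 2 * b ^ 2 * ρ ^ 2 - (a ^ 2 * d ^ 2 + b ^ 2 * c ^ 2 - e ^ 4) * ρ + c ^ 2 * d ^ 2 = 0)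
    (hQ : a ^ 2 * u ^ 2 * v ^ 2 - b ^ 2 * u ^ 2 - c ^ 2 * v ^ 2 + d ^ 2 - 2 * e ^ 2 * u * v = 0) :
    ρ * ((a ^ 2 * u ^ 2 - c ^ 2) * v - e ^ 2 * u) ^ 2 =
      (ρ - u ^ 2) * (c ^ 2 * d ^ 2 - a ^ 2 * b ^ 2 * ρ * u ^ 2) := by
  linear_combination ρ * (a ^ 2 * u ^ 2 - c ^ 2) * hQ + u ^ 2 * hρ

theorem stmt13_general (a b c d e δ ρ κ u v ω ξ : ℝ)
    (ha : a ≠ 0) (hb : b ≠ 0) (hc : c ≠ 0) (hd : d ≠ 0)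
    (hδ : δ = (a * d + b * c + e ^ 2) * (a * d + b * c - e ^ 2) *
      ((a * d - b * c + e ^ 2) * (a * d - b * c - e ^ 2)))
    (hδ0 : 0 ≤ δ)
    (hρ : ρ = (a ^ 2 * d ^ 2 + b ^ 2 * c ^ 2 - e ^ 4 + Real.sqrt δ) / (2 * a ^ 2 * b ^ 2))
    (hρ0 : 0 < ρ)
    (hκ : κ = a * b * ρ / (c * d))
    (hQ : a ^ 2 * u ^ 2 * v ^ 2 - b ^ 2 * u ^ 2 - c ^ 2 * v ^ 2 + d ^ 2
      - 2 * e ^ 2 * u * v = 0)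
    (hω : ω = u / Real.sqrt ρ)
    (hξ : ξ = ((a ^ 2 * u ^ 2 - c ^ 2) * v - e ^ 2 * u) / (c * d)) :
    ξ ^ 2 = (1 - ω ^ 2) * (1 - κ ^ 2 * ω ^ 2) := by
  have hnum := jacobi_quartic_numerator (jacobi_modulus_root ha hb hδ hδ0 hρ) hQ
  have hω2 : ω ^ 2 = u ^ 2 / ρ := by rw [hω, div_pow, Real.sq_sqrt hρ0.le]
  rw [hξ, hω2, hκ]
  field_simp
  linear_combination hnum

/-- the birational transformation to the Jacobi quartic curve. -/
theorem stmt13 (a b c d e δ ρ κ u v ω ξ : ℝ)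
    (ha : a ≠ 0) (hb : b ≠ 0) (hc : c ≠ 0) (hd : d ≠ 0)
    (hδ : δ = (a * d + b * c + e ^ 2) * (a * d + b * c - e ^ 2) *
      ((a * d - b * c + e ^ 2) * (a * d - b * c - e ^ 2)))
    (hδ0 : 0 ≤ δ)
    (hρ : ρ = (a ^ 2 * d ^ 2 + b ^ 2 * c ^ 2 - e ^ 4 + Real.sqrt δ) / (2 * a ^ 2 * b ^ 2))
    (hρ0 : 0 < ρ)
    (hκ : κ = a * b * ρ / (c * d))
    (hQ : a ^ 2 * u ^ 2 * v ^ 2 - b ^ 2 * u ^ 2 - c ^ 2 * v ^ 2 + d ^ 2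
      - 2 * e ^ 2 * u * v = 0)
    (hu : a ^ 2 * u ^ 2 - c ^ 2 ≠ 0)
    (hω : ω = u / Real.sqrt ρ)
    (hξ : ξ = ((a ^ 2 * u ^ 2 - c ^ 2) * v - e ^ 2 * u) / (c * d)) :
    ξ ^ 2 = (1 - ω ^ 2) * (1 - κ ^ 2 * ω ^ 2) :=
  stmt13_general a b c d e δ ρ κ u v ω ξ ha hb hc hd hδ hδ0 hρ hρ0 hκ hQ hω hξ
end
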